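/- Let a, b, c, d : U → ℝ be smooth on open U ⊆ ℝ³ with coordinates (u,v,w), h₁ = ad − bc, and h₅ = (h₁)_u(h₁)_{vw} − (h₁)_v(h₁)_{uw}. At a point p where (a,b,c,d)(p) ≠ (0,0,0,0) and d h₁(p) ≠ 0 and (h₁)_w(p) = 0, the map H₂ sending the 3-jet of (a,b,c,d) at p to (h₁, (h₁)_w, (h₁)_{ww}, h₅)(p) is a submersion in the jet variables; i.e. (0,0,0,0) is a regular value of H₂ on this set. -/
import Mathlib


/-!
Jet coordinates: `x j i` is the value at `p` of the derivative of the `i`-th entry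
of `(a,b,c,d)` indicated by `j`, where
`j = 0 : value`, `1 : ∂_w`, `2 : ∂_w²`, `3 : ∂_u`, `4 : ∂_v`, `5 : ∂_u∂_w`,
`6 : ∂_v∂_w`.  With `h₁ = ad − bc`, its derivatives expand by the Leibniz rule
into the polynomials below.
-/

/-- `h₁ = ad − bc` in jet coordinates. -/
def jh₁ (x : Fin 7 → Fin 4 → ℝ) : ℝ := x 0 0 * x 0 3 - x 0 1 * x 0 2

/-- `(h₁)_w` in jet coordinates. -/
def jh₁w (x : Fin 7 → Fin 4 → ℝ) : ℝ :=
  x 1 0 * x 0 3 + x 0 0 * x 1 3 - (x 1 1 * x 0 2 + x 0 1 * x 1 2)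

/-- `(h₁)_{ww}` in jet coordinates. -/
def jh₁ww (x : Fin 7 → Fin 4 → ℝ) : ℝ :=
  x 2 0 * x 0 3 + 2 * (x 1 0 * x 1 3) + x 0 0 * x 2 3
    - (x 2 1 * x 0 2 + 2 * (x 1 1 * x 1 2) + x 0 1 * x 2 2)

/-- `(h₁)_u` in jet coordinates. -/
def jh₁u (x : Fin 7 → Fin 4 → ℝ) : ℝ :=
  x 3 0 * x 0 3 + x 0 0 * x 3 3 - (x 3 1 * x 0 2 + x 0 1 * x 3 2)

/-- `(h₁)_v` in jet coordinates. -/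
def jh₁v (x : Fin 7 → Fin 4 → ℝ) : ℝ :=
  x 4 0 * x 0 3 + x 0 0 * x 4 3 - (x 4 1 * x 0 2 + x 0 1 * x 4 2)

/-- `(h₁)_{uw}` in jet coordinates. -/
def jh₁uw (x : Fin 7 → Fin 4 → ℝ) : ℝ :=
  x 5 0 * x 0 3 + x 3 0 * x 1 3 + x 1 0 * x 3 3 + x 0 0 * x 5 3
    - (x 5 1 * x 0 2 + x 3 1 * x 1 2 + x 1 1 * x 3 2 + x 0 1 * x 5 2)

/-- `(h₁)_{vw}` in jet coordinates. -/
def jh₁vw (x : Fin 7 → Fin 4 → ℝ) : ℝ :=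
  x 6 0 * x 0 3 + x 4 0 * x 1 3 + x 1 0 * x 4 3 + x 0 0 * x 6 3
    - (x 6 1 * x 0 2 + x 4 1 * x 1 2 + x 1 1 * x 4 2 + x 0 1 * x 6 2)

/-- `h₅ = (h₁)_u(h₁)_{vw} − (h₁)_v(h₁)_{uw}` in jet coordinates. -/
def jh₅ (x : Fin 7 → Fin 4 → ℝ) : ℝ := jh₁u x * jh₁vw x - jh₁v x * jh₁uw x

/-- The map `H₂ = (h₁, (h₁)_w, (h₁)_{ww}, h₅)` on jet coordinates. -/
def H₂ (x : Fin 7 → Fin 4 → ℝ) : Fin 4 → ℝ := ![jh₁ x, jh₁w x, jh₁ww x, jh₅ x]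

noncomputable def pj (j : Fin 7) (i : Fin 4) : (Fin 7 → Fin 4 → ℝ) →L[ℝ] ℝ :=
  (ContinuousLinearMap.proj (R := ℝ) (φ := fun _ : Fin 4 => ℝ) i).comp
    (ContinuousLinearMap.proj (R := ℝ) (φ := fun _ : Fin 7 => Fin 4 → ℝ) j)

lemma hasFDerivAt_pj (j : Fin 7) (i : Fin 4) (x : Fin 7 → Fin 4 → ℝ) :
    HasFDerivAt (fun y : Fin 7 → Fin 4 → ℝ => y j i) (pj j i) x := (pj j i).hasFDerivAt

@[simp] lemma pj_apply (j : Fin 7) (i : Fin 4) (v : Fin 7 → Fin 4 → ℝ) : pj j i v = v j i := rfl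

lemma hasFDerivAt_matrix4 {E : Type*} [NormedAddCommGroup E] [NormedSpace ℝ E]
    {f0 f1 f2 f3 : E → ℝ} {L0 L1 L2 L3 : E →L[ℝ] ℝ} {x : E}
    (h0 : HasFDerivAt f0 L0 x) (h1 : HasFDerivAt f1 L1 x)
    (h2 : HasFDerivAt f2 L2 x) (h3 : HasFDerivAt f3 L3 x) :
    HasFDerivAt (fun y => ![f0 y, f1 y, f2 y, f3 y])
      (ContinuousLinearMap.pi ![L0, L1, L2, L3]) x := by
  apply hasFDerivAt_pi.2
  intro i
  fin_cases i <;> simpa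

lemma surj_of_pi_triangular {E : Type*} [NormedAddCommGroup E] [NormedSpace ℝ E]
    (L0 L1 L2 L3 : E →L[ℝ] ℝ) (v0 v1 v2 v3 : E)
    (h00 : L0 v0 ≠ 0) (h01 : L0 v1 = 0) (h02 : L0 v2 = 0) (h03 : L0 v3 = 0)
    (h11 : L1 v1 ≠ 0) (h12 : L1 v2 = 0) (h13 : L1 v3 = 0)
    (h22 : L2 v2 ≠ 0) (h23 : L2 v3 = 0)
    (h33 : L3 v3 ≠ 0) :
    Function.Surjective ⇑(ContinuousLinearMap.pi ![L0, L1, L2, L3]) := by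
  intro t
  set c0 := t 0 / L0 v0 with hc0
  set c1 := (t 1 - c0 * L1 v0) / L1 v1 with hc1
  set c2 := (t 2 - c0 * L2 v0 - c1 * L2 v1) / L2 v2 with hc2
  set c3 := (t 3 - c0 * L3 v0 - c1 * L3 v1 - c2 * L3 v2) / L3 v3 with hc3
  have m0 : c0 * L0 v0 = t 0 := div_mul_cancel₀ _ h00
  have m1 : c1 * L1 v1 = t 1 - c0 * L1 v0 := div_mul_cancel₀ _ h11
  have m2 : c2 * L2 v2 = t 2 - c0 * L2 v0 - c1 * L2 v1 := div_mul_cancel₀ _ h22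
  have m3 : c3 * L3 v3 = t 3 - c0 * L3 v0 - c1 * L3 v1 - c2 * L3 v2 := div_mul_cancel₀ _ h33
  have e0 : c0 * L0 v0 + c1 * L0 v1 + c2 * L0 v2 + c3 * L0 v3 = t 0 := by
    rw [h01, h02, h03]; linarith
  have e1 : c0 * L1 v0 + c1 * L1 v1 + c2 * L1 v2 + c3 * L1 v3 = t 1 := by
    rw [h12, h13]; linarith
  have e2 : c0 * L2 v0 + c1 * L2 v1 + c2 * L2 v2 + c3 * L2 v3 = t 2 := by
    rw [h23]; linarith
  have e3 : c0 * L3 v0 + c1 * L3 v1 + c2 * L3 v2 + c3 * L3 v3 = t 3 := by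
    linarith
  refine ⟨c0 • v0 + c1 • v1 + c2 • v2 + c3 • v3, ?_⟩
  funext i
  have key : ∀ L : E →L[ℝ] ℝ, L (c0 • v0 + c1 • v1 + c2 • v2 + c3 • v3)
      = c0 * L v0 + c1 * L v1 + c2 * L v2 + c3 * L v3 := by
    intro L; simp [map_add, map_smul]
  fin_cases i
  · simpa [ContinuousLinearMap.pi_apply, key] using e0
  · simpa [ContinuousLinearMap.pi_apply, key] using e1
  · simpa [ContinuousLinearMap.pi_apply, key] using e2
  · simpa [ContinuousLinearMap.pi_apply, key] using e3

set_option maxHeartbeats 1000000 in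
/-- `(0,0,0,0)` is a regular value of `H₂` away from the degenerate loci: at a
jet with `(a,b,c,d) ≠ 0`, `d h₁ ≠ 0` (while `(h₁)_w = 0`, so
`((h₁)_u,(h₁)_v) ≠ (0,0)`) and `H₂ = 0`, the derivative of `H₂` is surjective. -/
theorem H₂_regular_value (x : Fin 7 → Fin 4 → ℝ)
    (hx : x 0 ≠ 0)
    (hdh₁ : ¬(jh₁u x = 0 ∧ jh₁v x = 0 ∧ jh₁w x = 0))
    (hw : jh₁w x = 0)
    (hzero : H₂ x = 0) :
    Function.Surjective (fderiv ℝ H₂ x) := by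
  have P := fun (j : Fin 7) (i : Fin 4) => hasFDerivAt_pj j i x
  have D1 := ((P 0 0).mul (P 0 3)).sub ((P 0 1).mul (P 0 2))
  have DW := (((P 1 0).mul (P 0 3)).add ((P 0 0).mul (P 1 3))).sub
      (((P 1 1).mul (P 0 2)).add ((P 0 1).mul (P 1 2)))
  have DWW := ((((P 2 0).mul (P 0 3)).add (((P 1 0).mul (P 1 3)).const_mul 2)).add
        ((P 0 0).mul (P 2 3))).sub
      ((((P 2 1).mul (P 0 2)).add (((P 1 1).mul (P 1 2)).const_mul 2)).add
        ((P 0 1).mul (P 2 2)))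
  have DU := (((P 3 0).mul (P 0 3)).add ((P 0 0).mul (P 3 3))).sub
      (((P 3 1).mul (P 0 2)).add ((P 0 1).mul (P 3 2)))
  have DV := (((P 4 0).mul (P 0 3)).add ((P 0 0).mul (P 4 3))).sub
      (((P 4 1).mul (P 0 2)).add ((P 0 1).mul (P 4 2)))
  have DUW := ((((P 5 0).mul (P 0 3)).add ((P 3 0).mul (P 1 3))).add
        ((P 1 0).mul (P 3 3))).add ((P 0 0).mul (P 5 3)) |>.sub
      (((((P 5 1).mul (P 0 2)).add ((P 3 1).mul (P 1 2))).add
        ((P 1 1).mul (P 3 2))).add ((P 0 1).mul (P 5 2)))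
  have DVW := ((((P 6 0).mul (P 0 3)).add ((P 4 0).mul (P 1 3))).add
        ((P 1 0).mul (P 4 3))).add ((P 0 0).mul (P 6 3)) |>.sub
      (((((P 6 1).mul (P 0 2)).add ((P 4 1).mul (P 1 2))).add
        ((P 1 1).mul (P 4 2))).add ((P 0 1).mul (P 6 2)))
  have D5 := (DU.mul DVW).sub (DV.mul DUW)
  have DH : HasFDerivAt H₂ _ x := hasFDerivAt_matrix4 D1 DW DWW D5
  rw [DH.fderiv]
  have key2 : ∀ y : ℝ, y ^ 2 ≤ 0 → y = 0 := fun y hy =>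
    pow_eq_zero_iff two_ne_zero |>.mp (le_antisymm hy (sq_nonneg y))
  have hS' : x 0 0 ^ 2 + x 0 1 ^ 2 + x 0 2 ^ 2 + x 0 3 ^ 2 ≠ 0 := by
    intro h
    apply hx
    have h0 : x 0 0 = 0 := key2 _ (by nlinarith [sq_nonneg (x 0 1), sq_nonneg (x 0 2), sq_nonneg (x 0 3)])
    have h1 : x 0 1 = 0 := key2 _ (by nlinarith [sq_nonneg (x 0 0), sq_nonneg (x 0 2), sq_nonneg (x 0 3)])
    have h2 : x 0 2 = 0 := key2 _ (by nlinarith [sq_nonneg (x 0 0), sq_nonneg (x 0 1), sq_nonneg (x 0 3)])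
    have h3 : x 0 3 = 0 := key2 _ (by nlinarith [sq_nonneg (x 0 0), sq_nonneg (x 0 1), sq_nonneg (x 0 2)])
    funext i
    fin_cases i
    · exact h0
    · exact h1
    · exact h2
    · exact h3
  have hUV : (0:ℝ) < jh₁u x ^ 2 + jh₁v x ^ 2 := by
    by_cases hu : jh₁u x = 0
    · have hv : jh₁v x ≠ 0 := fun hv => hdh₁ ⟨hu, hv, hw⟩
      rcases lt_or_gt_of_ne hv with h | h <;> nlinarith [sq_nonneg (jh₁u x)]
    · rcases lt_or_gt_of_ne hu with h | h <;> nlinarith [sq_nonneg (jh₁v x)]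
  have hT : (jh₁u x ^ 2 + jh₁v x ^ 2) * (x 0 0 ^ 2 + x 0 1 ^ 2 + x 0 2 ^ 2 + x 0 3 ^ 2) ≠ 0 := by
    intro h
    rcases mul_eq_zero.mp h with h | h
    · exact absurd h (ne_of_gt hUV)
    · exact hS' h
  set δ : Fin 4 → ℝ := ![x 0 3, -x 0 2, -x 0 1, x 0 0] with hδ
  refine surj_of_pi_triangular _ _ _ _ (Pi.single (0:Fin 7) δ : Fin 7 → Fin 4 → ℝ)
    (Pi.single (1:Fin 7) δ : Fin 7 → Fin 4 → ℝ)
    (Pi.single (2:Fin 7) δ : Fin 7 → Fin 4 → ℝ)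
    (jh₁u x • (Pi.single (6:Fin 7) δ : Fin 7 → Fin 4 → ℝ)
      - jh₁v x • (Pi.single (5:Fin 7) δ : Fin 7 → Fin 4 → ℝ))
    ?_ ?_ ?_ ?_ ?_ ?_ ?_ ?_ ?_ ?_ <;>
    simp [hδ, Pi.single_apply, ContinuousLinearMap.add_apply, ContinuousLinearMap.sub_apply,
      ContinuousLinearMap.smul_apply, pj_apply, smul_eq_mul, jh₁u, jh₁v]
  all_goals intro h
  all_goals first
    | exact hS' (by linear_combination h)
    | exact (by simpa only [jh₁u, jh₁v] using hT : _ ≠ (0:ℝ)) (by linear_combination h)
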